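/- arXiv:2211.07298 — 2 statements merged into one kernel-verified Lean document; each statement's English description precedes it below -/
import Mathlib

section
/- Let K be a field of characteristic 0, a ∈ K, n, k ≥ 1 integers, f_1,…,f_n ∈ K[u], and Q_1,…,Q_n polynomials in n(k+1)+2 variables over K. Then the system F_i = f_i(u) + t·Q_i(F_1, Δ_a F_1, …, Δ_a^k F_1, …, F_n, Δ_a F_n, …, Δ_a^k F_n, t, u), i = 1,…,n, admits a (unique) solution vector (F_1,…,F_n) ∈ (K[u][[t]])^n, constructed by iterating the fixed-point map: the coefficient of t^m of each F_i is determined recursively from the coefficients of t^0,…,t^{m−1}. -/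
/-!
The map `F ↦ f + t · Q(F, Δ_a F, …, Δ_a^k F, t, u)` is a contraction for the `t`-adic
filtration: if `F ≡ G mod t^m` then its values agree mod `t^(m+1)`, because `Δ_a` acts
coefficientwise in `t`, substitution into a polynomial respects congruences, and the factor `t`
raises the order by one. As `K[u][[t]]` is `t`-adically complete, the iterates of the map from `0`
form a Cauchy sequence whose limit is the unique fixed point.
-/

open Polynomial PowerSeries

/-- Divided difference on polynomials: `p ↦ (p - p(a))/(u - a)`. -/
noncomputable def deltaP {R : Type*} [CommRing R] (a : R) (p : Polynomial R) : Polynomial R :=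
  (p - Polynomial.C (p.eval a)) /ₘ (Polynomial.X - Polynomial.C a)

/-- The divided-difference operator `Δ_a` on `R[u][[t]]`, acting coefficientwise in `t`. -/
noncomputable def delta {R : Type*} [CommRing R] (a : R) (F : PowerSeries (Polynomial R)) :
    PowerSeries (Polynomial R) :=
  PowerSeries.mk fun m => deltaP a (PowerSeries.coeff m F)

/-- The argument vector `(∇^k F_1, …, ∇^k F_n, t, u)` used to substitute into the `Q_i`. -/
noncomputable def sysArgs {R : Type*} [CommRing R] (a : R) (n k : ℕ)
    (F : Fin n → PowerSeries (Polynomial R)) (tval : PowerSeries (Polynomial R)) :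
    Fin (n * (k + 1) + 2) → PowerSeries (Polynomial R) := fun j =>
  if h : (j : ℕ) < n * (k + 1) then
    (delta a)^[(j : ℕ) % (k + 1)]
      (F ⟨(j : ℕ) / (k + 1), (Nat.div_lt_iff_lt_mul (Nat.succ_pos k)).mpr h⟩)
  else if (j : ℕ) = n * (k + 1) then tval
  else PowerSeries.C Polynomial.X

def IsAdicContraction {R M ι : Type*} [CommRing R] [AddCommGroup M] [Module R M] (I : Ideal R)
    (Φ : (ι → M) → ι → M) : Prop :=
  ∀ m x y, (∀ i, x i ≡ y i [SMOD (I ^ m • ⊤ : Submodule R M)]) →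
    ∀ i, Φ x i ≡ Φ y i [SMOD (I ^ (m + 1) • ⊤ : Submodule R M)]

namespace IsAdicContraction

variable {R M ι : Type*} [CommRing R] [AddCommGroup M] [Module R M] {I : Ideal R}
  {Φ : (ι → M) → ι → M}

theorem iterate_smodEq (hΦ : IsAdicContraction I Φ) (x : ι → M) {m n : ℕ} (hmn : m ≤ n)
    (i : ι) : (Φ^[m] x) i ≡ (Φ^[n] x) i [SMOD (I ^ m • ⊤ : Submodule R M)] := by
  have step : ∀ m i,
      (Φ^[m] x) i ≡ (Φ^[m + 1] x) i [SMOD (I ^ m • ⊤ : Submodule R M)] := by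
    intro m
    induction m with
    | zero => simp [SModEq.top]
    | succ m ih =>
      rw [Function.iterate_succ_apply', Function.iterate_succ_apply' _ (m + 1)]
      exact hΦ m _ _ ih
  induction n, hmn using Nat.le_induction with
  | base => exact SModEq.rfl
  | succ n hmn ih =>
    exact ih.trans <|
      (step n i).mono (Submodule.smul_mono_left (Ideal.pow_le_pow_right hmn))

theorem smodEq_of_isFixedPt (hΦ : IsAdicContraction I Φ) {x y : ι → M}
    (hx : Function.IsFixedPt Φ x) (hy : Function.IsFixedPt Φ y) (m : ℕ) (i : ι) :
    x i ≡ y i [SMOD (I ^ m • ⊤ : Submodule R M)] := by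
  induction m generalizing i with
  | zero => simp [SModEq.top]
  | succ m ih => simpa only [hx.eq, hy.eq] using hΦ m x y ih i

theorem exists_isFixedPt [IsAdicComplete I M] (hΦ : IsAdicContraction I Φ) :
    ∃ x, Function.IsFixedPt Φ x := by
  choose L hL using fun i =>
    IsPrecomplete.prec (I := I) inferInstance (f := fun m => (Φ^[m] 0) i)
      (hΦ.iterate_smodEq 0 · i)
  refine ⟨L, funext fun i => (IsHausdorff.eq_iff_smodEq (I := I)).2 fun m => ?_⟩
  have h := hΦ m L (Φ^[m] 0) (fun i => (hL i m).symm) i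
  rw [← Function.iterate_succ_apply' Φ m 0] at h
  exact (h.trans (hL i (m + 1))).mono
    (Submodule.smul_mono_left (Ideal.pow_le_pow_right m.le_succ))

theorem existsUnique_isFixedPt [IsAdicComplete I M] (hΦ : IsAdicContraction I Φ) :
    ∃! x, Function.IsFixedPt Φ x := by
  obtain ⟨x, hx⟩ := hΦ.exists_isFixedPt
  exact ⟨x, hx, fun y hy => funext fun i =>
    (IsHausdorff.eq_iff_smodEq (I := I)).2 fun m => hΦ.smodEq_of_isFixedPt hy hx m i⟩

end IsAdicContraction

theorem SModEq.smul_of_mem {R M : Type*} [CommRing R] [AddCommGroup M] [Module R M]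
    {I : Ideal R} {m : ℕ} {r : R} {x y : M} (hr : r ∈ I)
    (h : x ≡ y [SMOD (I ^ m • ⊤ : Submodule R M)]) :
    r • x ≡ r • y [SMOD (I ^ (m + 1) • ⊤ : Submodule R M)] := by
  rw [SModEq.sub_mem] at h ⊢
  rw [← smul_sub, pow_succ', Submodule.mul_smul]
  exact Submodule.smul_mem_smul hr h

theorem SModEq.mvPolynomial_aeval {R A σ : Type*} [CommSemiring R] [CommRing A] [Algebra R A]
    {I : Ideal A} {x y : σ → A} (h : ∀ s, x s ≡ y s [SMOD I]) (p : MvPolynomial σ R) :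
    MvPolynomial.aeval x p ≡ MvPolynomial.aeval y p [SMOD I] := by
  induction p using MvPolynomial.induction_on with
  | C c => simp only [MvPolynomial.aeval_C, SModEq.rfl]
  | add p q hp hq => simpa only [map_add] using hp.add hq
  | mul_X p s hp => simpa only [map_mul, MvPolynomial.aeval_X] using hp.mul (h s)

namespace PowerSeries

variable {R : Type*} [CommRing R]

theorem smodEq_span_X_pow_iff {F G : R⟦X⟧} {m : ℕ} :
    F ≡ G [SMOD (Ideal.span {(X : R⟦X⟧)} ^ m • ⊤ : Submodule R⟦X⟧ R⟦X⟧)] ↔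
      ∀ j < m, coeff j F = coeff j G := by
  rw [SModEq.sub_mem, smul_eq_mul, Ideal.mul_top, Ideal.span_singleton_pow,
    Ideal.mem_span_singleton, X_pow_dvd_iff]
  simp only [map_sub, sub_eq_zero]

end PowerSeries

section System

variable {R : Type*} [CommRing R]

theorem delta_smodEq (a : R) {F G : R[X]⟦X⟧} {m : ℕ}
    (h : F ≡ G [SMOD (Ideal.span {(PowerSeries.X : R[X]⟦X⟧)} ^ m • ⊤ :
      Submodule R[X]⟦X⟧ R[X]⟦X⟧)]) :
    delta a F ≡ delta a G [SMOD (Ideal.span {(PowerSeries.X : R[X]⟦X⟧)} ^ m • ⊤ :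
      Submodule R[X]⟦X⟧ R[X]⟦X⟧)] := by
  rw [PowerSeries.smodEq_span_X_pow_iff] at h ⊢
  intro j hj
  simp only [delta, PowerSeries.coeff_mk, h j hj]

theorem sysArgs_smodEq (a : R) (n k : ℕ) {U : Submodule R[X]⟦X⟧ R[X]⟦X⟧}
    (hδ : ∀ {F G}, F ≡ G [SMOD U] → delta a F ≡ delta a G [SMOD U])
    {F G : Fin n → R[X]⟦X⟧} (h : ∀ i, F i ≡ G i [SMOD U]) (tval : R[X]⟦X⟧)
    (j : Fin (n * (k + 1) + 2)) :
    sysArgs a n k F tval j ≡ sysArgs a n k G tval j [SMOD U] := by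
  unfold sysArgs
  split_ifs
  · generalize (j : ℕ) % (k + 1) = r
    induction r with
    | zero => exact h _
    | succ r ih =>
      rw [Function.iterate_succ_apply', Function.iterate_succ_apply']
      exact hδ ih
  all_goals exact SModEq.rfl

noncomputable def sysMap (a : R) (n k : ℕ) (f : Fin n → R[X])
    (Q : Fin n → MvPolynomial (Fin (n * (k + 1) + 2)) R) (F : Fin n → R[X]⟦X⟧) :
    Fin n → R[X]⟦X⟧ := fun i =>
  PowerSeries.C (f i) + PowerSeries.X * MvPolynomial.aeval (sysArgs a n k F PowerSeries.X) (Q i)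

theorem isAdicContraction_sysMap (a : R) (n k : ℕ) (f : Fin n → R[X])
    (Q : Fin n → MvPolynomial (Fin (n * (k + 1) + 2)) R) :
    IsAdicContraction (Ideal.span {(PowerSeries.X : R[X]⟦X⟧)}) (sysMap a n k f Q) :=
  fun _ _ _ h i => SModEq.rfl.add <|
    (SModEq.mvPolynomial_aeval (sysArgs_smodEq a n k (delta_smodEq a) h _) (Q i)).smul_of_mem
      (Ideal.mem_span_singleton_self _)

end System

theorem system_solution_existsUnique_general {K : Type*} [Field K] (a : K) (n k : ℕ)
    (f : Fin n → Polynomial K)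
    (Q : Fin n → MvPolynomial (Fin (n * (k + 1) + 2)) K) :
    ∃! F : Fin n → PowerSeries (Polynomial K),
      ∀ i, F i = PowerSeries.C (f i) +
        PowerSeries.X * MvPolynomial.aeval (sysArgs a n k F PowerSeries.X) (Q i) := by
  refine (existsUnique_congr fun F => ?_).1
    (isAdicContraction_sysMap a n k f Q).existsUnique_isFixedPt
  exact eq_comm.trans funext_iff

/-- The system `F_i = f_i(u) + t·Q_i(∇^k F_1, …, ∇^k F_n, t, u)` admits exactly one vector of
solutions in `(K[u][[t]])^n` (existence by the t-adic fixed-point iteration, plus uniqueness). -/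
theorem system_solution_existsUnique {K : Type*} [Field K] [CharZero K] (a : K) (n k : ℕ)
    (hn : 1 ≤ n) (hk : 1 ≤ k) (f : Fin n → Polynomial K)
    (Q : Fin n → MvPolynomial (Fin (n * (k + 1) + 2)) K) :
    ∃! F : Fin n → PowerSeries (Polynomial K),
      ∀ i, F i = PowerSeries.C (f i) +
        PowerSeries.X * MvPolynomial.aeval (sysArgs a n k F PowerSeries.X) (Q i) :=
  system_solution_existsUnique_general a n k f Q
end

section
/- Let K be a field of characteristic 0, n ≥ 2, and let E_1, …, E_n ∈ K[x_1, …, x_n, u] (possibly with further parameters). Fix a point at which the n × n Jacobian matrix M = (∂_{x_j} E_i) is singular but every (n−1) × (n−1) minor of M is nonzero. Suppose R is a polynomial depending only on x_1 (not on x_2,…,x_n) and V_1,…,V_n are polynomials such that R = Σ_{i=1}^n E_i V_i identically, and that E_1 = ⋯ = E_n = 0 at the chosen point. Then ∂_{x_1} R = 0 at that point. -/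
open MvPolynomial

/-- Proposition 4.1 of the paper.  Let `E_1, …, E_n ∈ K[x_1, …, x_n, u]` (with `n = m+2 ≥ 2`,
the variable `u` encoded as `Sum.inr ()`) and fix a point `p` at which all `E_i` vanish, the
Jacobian matrix `M = (∂_{x_j} E_i)` is singular, but every `(n−1) × (n−1)` minor of `M` is
nonzero.  If `R = Σ E_i V_i` depends only on `x_1` among the `x`-variables, then
`∂_{x_1} R` vanishes at the point. -/
theorem pderiv_eq_zero_of_singular_jacobian {K : Type*} [Field K] [CharZero K] (m : ℕ)
    (E V : Fin (m + 2) → MvPolynomial (Fin (m + 2) ⊕ Unit) K)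
    (R : MvPolynomial (Fin (m + 2) ⊕ Unit) K)
    (p : Fin (m + 2) ⊕ Unit → K)
    (hsing : (Matrix.of fun i j : Fin (m + 2) =>
      eval p (pderiv (Sum.inl j) (E i))).det = 0)
    (hminor : ∀ i j : Fin (m + 2),
      ((Matrix.of fun i' j' : Fin (m + 2) =>
        eval p (pderiv (Sum.inl j') (E i'))).submatrix i.succAbove j.succAbove).det ≠ 0)
    (hRdep : ∀ j : Fin (m + 2), j ≠ 0 → pderiv (Sum.inl j) R = 0)
    (hRsum : R = ∑ i, E i * V i)
    (hzero : ∀ i, eval p (E i) = 0) :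
    eval p (pderiv (Sum.inl 0) R) = 0 := by
  classical
  set M : Matrix (Fin (m + 2)) (Fin (m + 2)) K :=
    Matrix.of fun i j => eval p (pderiv (Sum.inl j) (E i)) with hMdef
  -- a nonzero kernel vector of M
  obtain ⟨w, hw0, hw⟩ := Matrix.exists_mulVec_eq_zero_iff.2 hsing
  -- the first coordinate of w is nonzero
  have hw00 : w 0 ≠ 0 := by
    intro h0
    obtain ⟨k, hk⟩ := Function.ne_iff.1 hw0
    have hkne : k ≠ 0 := by
      rintro rfl
      exact hk (by simpa using h0)
    obtain ⟨k', rfl⟩ := Fin.exists_succ_eq.2 hkne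
    have hdet : (M.submatrix (Fin.succAbove 0) (Fin.succAbove 0)).det = 0 := by
      refine Matrix.exists_mulVec_eq_zero_iff.1 ⟨fun j' => w j'.succ, ?_, ?_⟩
      · intro h
        exact hk (by simpa using congrFun h k')
      · funext i'
        have h1 := congrFun hw ((0 : Fin (m + 2)).succAbove i')
        simp only [Matrix.mulVec, dotProduct, Pi.zero_apply] at h1 ⊢
        rw [Fin.sum_univ_succ] at h1
        simp only [h0, mul_zero, zero_add] at h1
        simp only [Matrix.submatrix_apply, Fin.zero_succAbove]
        exact h1
    exact hminor 0 0 hdet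
  -- derivative of R at p in terms of M and V
  have hdR : ∀ j : Fin (m + 2),
      eval p (pderiv (Sum.inl j) R) = ∑ i, M i j * eval p (V i) := by
    intro j
    have h1 : pderiv (Sum.inl j) R =
        ∑ i, (pderiv (Sum.inl j) (E i) * V i + E i * pderiv (Sum.inl j) (V i)) := by
      rw [hRsum, map_sum]
      exact Finset.sum_congr rfl fun i _ => by rw [pderiv_mul]
    rw [h1, map_sum]
    refine Finset.sum_congr rfl fun i _ => ?_
    rw [map_add, map_mul, map_mul, hzero i, zero_mul, add_zero]
    rfl
  -- pairing with the kernel vector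
  have hv : (M.transpose.mulVec fun i => eval p (V i)) =
      fun j => eval p (pderiv (Sum.inl j) R) := by
    funext j
    rw [hdR j]
    simp [Matrix.mulVec, dotProduct, Matrix.transpose_apply]
  have hpair : dotProduct w (fun j => eval p (pderiv (Sum.inl j) R)) = 0 := by
    rw [← hv, Matrix.dotProduct_mulVec, Matrix.vecMul_transpose, hw,
      zero_dotProduct]
  have hsplit : dotProduct w (fun j => eval p (pderiv (Sum.inl j) R)) =
      w 0 * eval p (pderiv (Sum.inl 0) R) := by
    rw [dotProduct, Fin.sum_univ_succ]
    have : ∀ j' : Fin (m + 1),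
        eval p (pderiv (Sum.inl j'.succ) R) = 0 := fun j' => by
      rw [hRdep j'.succ (Fin.succ_ne_zero j')]; simp
    simp [this]
  rw [hsplit] at hpair
  exact (mul_eq_zero.1 hpair).resolve_left hw00
end
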